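/- For any connected graph G with at least one vertex and any graph H, the domatic number of the corona product satisfies d(G⊙H) = d(H) + 1. -/

import Mathlib

/-!
A domatic partition of `H` with classes `V₁, …, V_d` extends to one of `G ⊙ H` with `d + 1`
classes: put every copy of `H` into the old classes and all of `G` into a new class. Conversely,
fix a vertex `u` of `G`. A vertex of the copy `H_u` has no neighbour outside `H_u` except `u`, so
every class of a domatic partition of `G ⊙ H` other than the class of `u` meets `H_u` in a
dominating set of `H`. Merging the trace of the class of `u` into any other class leaves a domatic
partition of `H` with one class fewer.
-/

open SimpleGraph

/-- The corona product `G ⊙ H`: one copy of `G` together with one copy of `H`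
for each vertex of `G`, where the `i`-th vertex of `G` is joined by an edge to
every vertex of the `i`-th copy of `H`. -/
def corona {α β : Type*} (G : SimpleGraph α) (H : SimpleGraph β) :
    SimpleGraph (α ⊕ α × β) where
  Adj x y :=
    match x, y with
    | Sum.inl u, Sum.inl v => G.Adj u v
    | Sum.inl u, Sum.inr q => u = q.1
    | Sum.inr p, Sum.inl v => p.1 = v
    | Sum.inr p, Sum.inr q => p.1 = q.1 ∧ H.Adj p.2 q.2
  symm := ⟨by
    rintro (u | p) (v | q) h
    · exact h.symm
    · exact h.symm
    · exact h.symm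
    · exact ⟨h.1.symm, h.2.symm⟩⟩
  loopless := ⟨by
    rintro (u | p) h
    · exact G.loopless.irrefl u h
    · exact H.loopless.irrefl p.2 h.2⟩

/-- `D` is a dominating set of `G`: every vertex outside `D` has a neighbor in `D`. -/
def IsDominatingSet {α : Type*} (G : SimpleGraph α) (D : Set α) : Prop :=
  ∀ v ∉ D, ∃ u ∈ D, G.Adj v u

/-- The domination number of `G`. -/
noncomputable def dominationNumber {α : Type*} (G : SimpleGraph α) : ℕ :=
  sInf {n | ∃ D : Set α, IsDominatingSet G D ∧ D.ncard = n}

/-- The domatic number of `G`: the maximum number of classes in a partition of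
the vertex set of `G` into dominating sets (realized as a map onto `Fin t`
all of whose fibers are dominating sets). -/
noncomputable def domaticNumber {α : Type*} (G : SimpleGraph α) : ℕ :=
  sSup {t | ∃ f : α → Fin t, ∀ i : Fin t, IsDominatingSet G (f ⁻¹' {i})}

section Domatic

variable {α β ι : Type*}

theorem IsDominatingSet.nonempty [Nonempty α] {G : SimpleGraph α} {D : Set α}
    (hD : IsDominatingSet G D) : D.Nonempty := by
  obtain ⟨v⟩ := ‹Nonempty α›
  by_cases hv : v ∈ D
  · exact ⟨v, hv⟩
  · obtain ⟨u, hu, -⟩ := hD v hv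
    exact ⟨u, hu⟩

theorem IsDominatingSet.mono {G : SimpleGraph α} {D E : Set α} (hD : IsDominatingSet G D)
    (hDE : D ⊆ E) : IsDominatingSet G E := fun v hv ↦ by
  obtain ⟨u, hu, hvu⟩ := hD v fun h ↦ hv (hDE h)
  exact ⟨u, hDE hu, hvu⟩

def IsDomaticPartition (G : SimpleGraph α) (f : α → ι) : Prop :=
  ∀ i, IsDominatingSet G (f ⁻¹' {i})

theorem IsDomaticPartition.surjective [Nonempty α] {G : SimpleGraph α} {f : α → ι}
    (hf : IsDomaticPartition G f) : Function.Surjective f := fun i ↦ (hf i).nonempty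

theorem IsDomaticPartition.comp_equiv {G : SimpleGraph α} {κ : Type*} {f : α → ι}
    (hf : IsDomaticPartition G f) (e : ι ≃ κ) : IsDomaticPartition G (e ∘ f) := fun j ↦ by
  have hfiber : (e ∘ f) ⁻¹' {j} = f ⁻¹' {e.symm j} := by
    ext v
    simp [Equiv.eq_symm_apply]
  exact hfiber ▸ hf (e.symm j)

section DomaticNumber

variable [Fintype α] [Nonempty α] {G : SimpleGraph α}

theorem bddAbove_domaticPartition_card :
    BddAbove {t | ∃ f : α → Fin t, IsDomaticPartition G f} := by
  refine ⟨Fintype.card α, ?_⟩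
  rintro t ⟨f, hf⟩
  simpa using Fintype.card_le_of_surjective f hf.surjective

theorem IsDomaticPartition.card_le_domaticNumber [Fintype ι] {f : α → ι}
    (hf : IsDomaticPartition G f) : Fintype.card ι ≤ domaticNumber G :=
  le_csSup bddAbove_domaticPartition_card ⟨_, hf.comp_equiv (Fintype.equivFin ι)⟩

theorem exists_isDomaticPartition_fin_domaticNumber :
    ∃ f : α → Fin (domaticNumber G), IsDomaticPartition G f := by
  have hone : IsDomaticPartition G fun _ : α ↦ (0 : Fin 1) := fun i v hv ↦
    absurd (Subsingleton.elim _ _) hv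
  exact Nat.sSup_mem (s := {t | ∃ f : α → Fin t, IsDomaticPartition G f}) ⟨1, _, hone⟩
    bddAbove_domaticPartition_card

theorem card_le_domaticNumber_add_one [Fintype ι] [DecidableEq ι] {c : α → ι} {k : ι}
    (hc : ∀ i ≠ k, IsDominatingSet G (c ⁻¹' {i})) : Fintype.card ι ≤ domaticNumber G + 1 := by
  rcases subsingleton_or_nontrivial ι with hι | hι
  · have := Fintype.card_le_one_iff_subsingleton.2 hι
    omega
  obtain ⟨k', hk'⟩ := exists_ne k
  let merge : α → {i // i ≠ k} := fun v ↦ if h : c v = k then ⟨k', hk'⟩ else ⟨c v, h⟩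
  have hmerge : IsDomaticPartition G merge := fun i ↦ (hc i i.2).mono fun v hv ↦ by
    have hv : c v = i := hv
    simp [merge, hv, i.2]
  have hcard := hmerge.card_le_domaticNumber
  rw [Fintype.card_subtype_compl, Fintype.card_subtype_eq] at hcard
  omega

end DomaticNumber

theorem domaticNumber_le_of_forall {G : SimpleGraph α} {n : ℕ}
    (h : ∀ t (f : α → Fin t), IsDomaticPartition G f → t ≤ n) : domaticNumber G ≤ n :=
  csSup_le' fun _ ⟨f, hf⟩ ↦ h _ f hf

section Corona

variable {G : SimpleGraph α} {H : SimpleGraph β}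

theorem IsDominatingSet.corona_fiber {D : Set (α ⊕ α × β)}
    (hD : IsDominatingSet (corona G H) D) {u : α} (hu : Sum.inl u ∉ D) :
    IsDominatingSet H {b | Sum.inr (u, b) ∈ D} := fun b hb ↦ by
  obtain ⟨x | ⟨v, b'⟩, hx, hadj⟩ := hD _ hb
  · obtain rfl : u = x := hadj
    exact absurd hx hu
  · obtain ⟨rfl, hbb'⟩ : u = v ∧ H.Adj b b' := hadj
    exact ⟨b', hx, hbb'⟩

theorem IsDomaticPartition.corona [Nonempty β] {f : β → ι} (hf : IsDomaticPartition H f) :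
    IsDomaticPartition (corona G H) (Sum.elim (fun _ ↦ none) fun p ↦ some (f p.2)) := by
  rintro (_ | i) (u | ⟨u, b⟩) hv
  · exact absurd rfl hv
  · exact ⟨Sum.inl u, rfl, rfl⟩
  · obtain ⟨b, hb⟩ := (hf i).nonempty
    exact ⟨Sum.inr (u, b), by simpa using hb, rfl⟩
  · obtain ⟨b', hb', hbb'⟩ := hf i b fun hb ↦ hv (by simpa using hb)
    exact ⟨Sum.inr (u, b'), by simpa using hb', rfl, hbb'⟩

theorem domaticNumber_corona_le [Nonempty α] [Fintype β] [Nonempty β] :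
    domaticNumber (corona G H) ≤ domaticNumber H + 1 := by
  classical
  obtain ⟨u⟩ := ‹Nonempty α›
  refine domaticNumber_le_of_forall fun t g hg ↦ ?_
  simpa using card_le_domaticNumber_add_one (c := fun b ↦ g (Sum.inr (u, b)))
    (k := g (Sum.inl u)) fun i hi ↦ (hg i).corona_fiber (Ne.symm hi)

theorem domaticNumber_add_one_le_corona [Fintype α] [Nonempty α] [Fintype β] [Nonempty β] :
    domaticNumber H + 1 ≤ domaticNumber (corona G H) := by
  obtain ⟨f, hf⟩ := exists_isDomaticPartition_fin_domaticNumber (G := H)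
  simpa using (hf.corona (G := G)).card_le_domaticNumber

end Corona

end Domatic

/-- For any connected graph `G` and any (nonempty) graph `H`,
`d(G ⊙ H) = d(H) + 1`. -/
theorem stmt_18 {α β : Type*} [Fintype α] [Fintype β] [Nonempty β]
    (G : SimpleGraph α) (H : SimpleGraph β) (hG : G.Connected) :
    domaticNumber (corona G H) = domaticNumber H + 1 := by
  have : Nonempty α := hG.nonempty
  exact domaticNumber_corona_le.antisymm domaticNumber_add_one_le_corona
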